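/- arXiv:2010.06842 — 7 statements merged into one kernel-verified Lean document; each statement's English description precedes it below -/
import Mathlib

section
/- Let c ∈ ℝ and let X, Y, Z be populations such that Avg(Z) = c. If V_CLc(X) > V_CLc(Y) and |Z| > (|X|·V_CLc(Y) − |Y|·V_CLc(X)) / (V_CLc(X) − V_CLc(Y)), then Avg(X + Z) > Avg(Y + Z). -/
/-- The size of a population: total number of welfare subjects. -/
noncomputable def psize (X : ℝ →₀ ℕ) : ℕ := X.sum fun _ n => n

/-- Total welfare of a population. -/
noncomputable def ptot (X : ℝ →₀ ℕ) : ℝ := X.sum fun w n => (n : ℝ) * w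

/-- Average welfare of a population. -/
noncomputable def pavg (X : ℝ →₀ ℕ) : ℝ := ptot X / (psize X : ℝ)

/-- Critical-level utilitarian value with critical level `c`. -/
noncomputable def vcl (c : ℝ) (X : ℝ →₀ ℕ) : ℝ := ptot X - c * (psize X : ℝ)

lemma psize_add (X Y : ℝ →₀ ℕ) : psize (X + Y) = psize X + psize Y :=
  Finsupp.sum_add_index' (fun _ => rfl) (fun _ _ _ => rfl)

lemma ptot_add (X Y : ℝ →₀ ℕ) : ptot (X + Y) = ptot X + ptot Y :=
  Finsupp.sum_add_index' (fun _ => by simp) (fun w m n => by push_cast; ring)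

lemma psize_pos (X : ℝ →₀ ℕ) (hX : X ≠ 0) : 0 < psize X := by
  rcases Finsupp.ne_iff.mp hX with ⟨w, hw⟩
  simp only [Finsupp.coe_zero, Pi.zero_apply] at hw
  have hmem : w ∈ X.support := Finsupp.mem_support_iff.mpr hw
  exact lt_of_lt_of_le (Nat.pos_of_ne_zero hw)
    (Finset.single_le_sum (fun _ _ => Nat.zero_le _) hmem)

theorem stmt_0 (c : ℝ) (X Y Z : ℝ →₀ ℕ) (hX : X ≠ 0) (hY : Y ≠ 0) (hZ : Z ≠ 0)
    (hAvgZ : pavg Z = c)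
    (hV : vcl c X > vcl c Y)
    (hSize : (psize Z : ℝ) >
      ((psize X : ℝ) * vcl c Y - (psize Y : ℝ) * vcl c X) / (vcl c X - vcl c Y)) :
    pavg (X + Z) > pavg (Y + Z) := by
  have hnX : (0 : ℝ) < psize X := by exact_mod_cast psize_pos X hX
  have hnY : (0 : ℝ) < psize Y := by exact_mod_cast psize_pos Y hY
  have hnZ : (0 : ℝ) < psize Z := by exact_mod_cast psize_pos Z hZ
  have htZ : ptot Z = c * psize Z := by
    have := hAvgZ
    rw [pavg, div_eq_iff (ne_of_gt hnZ)] at this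
    linarith [this]
  have hdiff : (0 : ℝ) < vcl c X - vcl c Y := by linarith
  have key : (psize Z : ℝ) * (vcl c X - vcl c Y) >
      (psize X : ℝ) * vcl c Y - (psize Y : ℝ) * vcl c X := by
    rw [gt_iff_lt, div_lt_iff₀ hdiff] at hSize
    linarith
  have hvX : vcl c X = ptot X - c * psize X := rfl
  have hvY : vcl c Y = ptot Y - c * psize Y := rfl
  rw [pavg, pavg, psize_add, psize_add, ptot_add, ptot_add]
  push_cast
  rw [gt_iff_lt, div_lt_div_iff₀ (by positivity) (by positivity)]
  nlinarith [key, hvX, hvY]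
end

section
/- Let T be a set of populations containing populations of arbitrarily large size (for every n ∈ ℕ there is Z ∈ T with |Z| ≥ n). Let V and Vm be real-valued functions on populations and s : ℕ → ℝ with s(n) > 0 for all n. Assume: (i) for every population X and every ε > 0 there is N such that every Z ∈ T with |Z| ≥ N satisfies |(V(X + Z) − V(Z))·s(|Z|) − Vm(X)| < ε; and (ii) Vm is separable, i.e., for all populations X, Y, Z one has Vm(X + Z) > Vm(Y + Z) if and only if Vm(X) > Vm(Y). Then for all populations X, Y with Vm(X) > Vm(Y), there exists N such that V(X + Z) > V(Y + Z) for every Z ∈ T with |Z| ≥ N. -/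
theorem stmt_2 (T : Set (ℝ →₀ ℕ)) (hT0 : ∀ Z ∈ T, Z ≠ 0)
    (hTlarge : ∀ n : ℕ, ∃ Z ∈ T, psize Z ≥ n)
    (V Vm : (ℝ →₀ ℕ) → ℝ) (s : ℕ → ℝ) (hs : ∀ n, s n > 0)
    (hconv : ∀ X : ℝ →₀ ℕ, X ≠ 0 → ∀ ε > (0 : ℝ), ∃ N : ℕ, ∀ Z ∈ T, psize Z ≥ N →
      |(V (X + Z) - V Z) * s (psize Z) - Vm X| < ε)
    (hsep : ∀ X Y Z : ℝ →₀ ℕ, X ≠ 0 → Y ≠ 0 → Z ≠ 0 →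
      (Vm (X + Z) > Vm (Y + Z) ↔ Vm X > Vm Y))
    (X Y : ℝ →₀ ℕ) (hX : X ≠ 0) (hY : Y ≠ 0) (hV : Vm X > Vm Y) :
    ∃ N : ℕ, ∀ Z ∈ T, psize Z ≥ N → V (X + Z) > V (Y + Z) := by
  set ε := (Vm X - Vm Y) / 2 with hε
  have hεpos : ε > 0 := by simp [hε]; linarith
  obtain ⟨N₁, hN₁⟩ := hconv X hX ε hεpos
  obtain ⟨N₂, hN₂⟩ := hconv Y hY ε hεpos
  refine ⟨max N₁ N₂, fun Z hZ hsz => ?_⟩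
  have h1 := hN₁ Z hZ (le_trans (le_max_left _ _) hsz)
  have h2 := hN₂ Z hZ (le_trans (le_max_right _ _) hsz)
  rw [abs_lt] at h1 h2
  have hspos := hs (psize Z)
  have : (V (X + Z) - V Z) * s (psize Z) > (V (Y + Z) - V Z) * s (psize Z) := by
    have : Vm X - ε = Vm Y + ε := by rw [hε]; ring
    linarith
  nlinarith
end

section
/- Let g : ℕ → ℝ be increasing (g(k) ≤ g(k+1) for all k), concave (g(k+2) − g(k+1) ≤ g(k+1) − g(k) for all k), and bounded above. Then for every fixed m ∈ ℕ, the sequence n·(g(n + m) − g(n)) tends to 0 as n → ∞. -/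
theorem stmt_3 (g : ℕ → ℝ)
    (hmono : ∀ k, g k ≤ g (k + 1))
    (hconc : ∀ k, g (k + 2) - g (k + 1) ≤ g (k + 1) - g k)
    (hbdd : BddAbove (Set.range g))
    (m : ℕ) :
    Filter.Tendsto (fun n : ℕ => (n : ℝ) * (g (n + m) - g n))
      Filter.atTop (nhds 0) := by
  set d : ℕ → ℝ := fun n => g (n + 1) - g n with hd
  have hd0 : ∀ n, 0 ≤ d n := fun n => sub_nonneg.2 (hmono n)
  have hdanti : ∀ a b, a ≤ b → d b ≤ d a := by
    intro a b hab
    have : Antitone d := antitone_nat_of_succ_le fun n => hconc n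
    exact this hab
  have hgmono : Monotone g := monotone_nat_of_le_succ hmono
  -- g(n+m) - g n ≤ m * d n
  have hsum : ∀ n, g (n + m) - g n ≤ (m : ℝ) * d n := by
    intro n
    induction m with
    | zero => simp
    | succ k ih =>
      have h1 : g (n + (k + 1)) - g (n + k) = d (n + k) := by
        simp [hd, add_assoc]
      have h2 : d (n + k) ≤ d n := hdanti n (n + k) (Nat.le_add_right _ _)
      have : g (n + (k + 1)) - g n = (g (n + (k+1)) - g (n + k)) + (g (n + k) - g n) := by ring
      rw [this, h1]
      push_cast
      nlinarith
  -- k * d (a + k) ≤ g (a + k) - g a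
  have hlow : ∀ a k : ℕ, (k : ℝ) * d (a + k) ≤ g (a + k) - g a := by
    intro a k
    induction k with
    | zero => simp
    | succ j ih =>
      have h2 : d (a + (j + 1)) ≤ d (a + j) := hdanti _ _ (by omega)
      have h1 : g (a + (j + 1)) - g (a + j) = d (a + j) := by
        simp [hd, add_assoc]
      have hdn : 0 ≤ d (a + (j+1)) := hd0 _
      push_cast
      nlinarith
  -- limit L
  obtain ⟨L, hL⟩ : ∃ L, Filter.Tendsto g Filter.atTop (nhds L) :=
    ⟨_, tendsto_atTop_ciSup hgmono hbdd⟩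
  have hhalf : Filter.Tendsto (fun n : ℕ => n / 2) Filter.atTop Filter.atTop := by
    apply Filter.tendsto_atTop_atTop.2
    intro b
    exact ⟨2 * b, fun n hn => by omega⟩
  have hg2 : Filter.Tendsto (fun n : ℕ => g (n / 2)) Filter.atTop (nhds L) :=
    hL.comp hhalf
  have hupper : Filter.Tendsto (fun n : ℕ => 2 * (m : ℝ) * (g n - g (n / 2)))
      Filter.atTop (nhds 0) := by
    have := ((hL.sub hg2).const_mul (2 * (m : ℝ)))
    simpa using this
  apply squeeze_zero (g := fun n : ℕ => 2 * (m : ℝ) * (g n - g (n / 2)))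
  · intro n
    exact mul_nonneg (Nat.cast_nonneg n) (sub_nonneg.2 (hgmono (Nat.le_add_right _ _)))
  · intro n
    have h1 : g (n + m) - g n ≤ (m : ℝ) * d n := hsum n
    have h2 : ((n - n / 2 : ℕ) : ℝ) * d n ≤ g n - g (n / 2) := by
      have := hlow (n / 2) (n - n / 2)
      have hnn : n / 2 + (n - n / 2) = n := by omega
      rwa [hnn] at this
    have hcard : (n : ℝ) ≤ 2 * ((n - n / 2 : ℕ) : ℝ) := by
      have : n ≤ 2 * (n - n / 2) := by omega
      exact_mod_cast this
    have hdn : 0 ≤ d n := hd0 n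
    have hgn : 0 ≤ g (n + m) - g n := sub_nonneg.2 (hgmono (Nat.le_add_right _ _))
    calc (n : ℝ) * (g (n + m) - g n) ≤ (n : ℝ) * ((m : ℝ) * d n) :=
          mul_le_mul_of_nonneg_left h1 (Nat.cast_nonneg n)
      _ ≤ (2 * ((n - n / 2 : ℕ) : ℝ)) * ((m : ℝ) * d n) :=
          mul_le_mul_of_nonneg_right hcard (mul_nonneg (Nat.cast_nonneg m) hdn)
      _ = 2 * (m : ℝ) * (((n - n / 2 : ℕ) : ℝ) * d n) := by ring
      _ ≤ 2 * (m : ℝ) * (g n - g (n / 2)) :=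
          mul_le_mul_of_nonneg_left h2
            (by positivity)
  · exact hupper
end

section
/- Let g : ℝ → ℝ be strictly increasing, concave, continuous, and surjective (so that its inverse g⁻¹ : ℝ → ℝ is defined), and define the quasi-arithmetic mean QAM(X) = g⁻¹(Σ_w (X(w)/|X|)·g(w)) for each population X. Let Z₀ be a fixed population, assume g is differentiable at the point QAM(Z₀), and define the weighting function f(w) = g(w) − g(QAM(Z₀)). Then for all populations X and Y with Σ_w X(w)·f(w) > Σ_w Y(w)·f(w), there exists N ∈ ℕ such that QAM(X + n·Z₀) > QAM(Y + n·Z₀) for every integer n ≥ N. -/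
/-- The quasi-arithmetic mean of a population, relative to a transformation `g`. -/
noncomputable def qam (g : ℝ → ℝ) (X : ℝ →₀ ℕ) : ℝ :=
  Function.invFun g (X.sum fun w n => ((n : ℝ) / (psize X : ℝ)) * g w)

/-- total g-value of a population -/
noncomputable def tg (g : ℝ → ℝ) (X : ℝ →₀ ℕ) : ℝ := X.sum fun w n => (n : ℝ) * g w

lemma qam_eq (g : ℝ → ℝ) (X : ℝ →₀ ℕ) :
    qam g X = Function.invFun g (tg g X / (psize X : ℝ)) := by
  unfold qam tg
  congr 1
  rw [Finsupp.sum, Finsupp.sum, Finset.sum_div]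
  exact Finset.sum_congr rfl fun w _ => by ring

lemma psize_cast (X : ℝ →₀ ℕ) : ((psize X : ℝ)) = X.sum fun _ n => (n : ℝ) := by
  unfold psize
  rw [Finsupp.sum, Finsupp.sum, Nat.cast_sum]

lemma tg_add (g : ℝ → ℝ) (X Y : ℝ →₀ ℕ) : tg g (X + Y) = tg g X + tg g Y := by
  unfold tg
  apply Finsupp.sum_add_index' (by simp) (fun a b₁ b₂ => by push_cast; ring)

lemma tg_smul (g : ℝ → ℝ) (n : ℕ) (Z : ℝ →₀ ℕ) : tg g (n • Z) = (n : ℝ) * tg g Z := by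
  induction n with
  | zero => simp [tg]
  | succ k ih =>
      rw [succ_nsmul, tg_add, ih]
      push_cast; ring

lemma psize_smul (n : ℕ) (Z : ℝ →₀ ℕ) : psize (n • Z) = n * psize Z := by
  induction n with
  | zero => simp [psize]
  | succ k ih => rw [succ_nsmul, psize_add, ih]; ring

theorem stmt_11 (g : ℝ → ℝ)
    (hgmono : StrictMono g) (hgconc : ConcaveOn ℝ Set.univ g)
    (hgcont : Continuous g) (hgsurj : Function.Surjective g)
    (Z₀ : ℝ →₀ ℕ) (hZ₀ : Z₀ ≠ 0)
    (hgdiff : DifferentiableAt ℝ g (qam g Z₀))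
    (f : ℝ → ℝ)
    (hf : ∀ w : ℝ, f w = g w - g (qam g Z₀))
    (X Y : ℝ →₀ ℕ) (hX : X ≠ 0) (hY : Y ≠ 0)
    (hfsum : X.sum (fun w n => (n : ℝ) * f w) > Y.sum (fun w n => (n : ℝ) * f w)) :
    ∃ N : ℕ, ∀ n : ℕ, n ≥ N → qam g (X + n • Z₀) > qam g (Y + n • Z₀) := by
  have hinj : Function.Injective g := hgmono.injective
  have hright : Function.RightInverse (Function.invFun g) g :=
    Function.rightInverse_invFun hgsurj
  have hinvmono : StrictMono (Function.invFun g) := by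
    intro s t hst
    have : g (Function.invFun g s) < g (Function.invFun g t) := by
      rwa [hright s, hright t]
    exact hgmono.lt_iff_lt.mp this
  set m : ℝ := g (qam g Z₀) with hm
  set s₀ : ℝ := (psize Z₀ : ℝ) with hs₀
  have hs₀pos : 0 < s₀ := by rw [hs₀]; exact_mod_cast psize_pos Z₀ hZ₀
  -- g(qam Z₀) = tg Z₀ / s₀
  have hmval : m = tg g Z₀ / s₀ := by
    rw [hm, qam_eq, hright]
  have htgZ : tg g Z₀ = m * s₀ := by
    rw [hmval]; field_simp
  -- rewrite the f-sums
  have hsum_eq : ∀ W : ℝ →₀ ℕ, (W.sum fun w n => (n : ℝ) * f w)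
      = tg g W - m * (psize W : ℝ) := by
    intro W
    have : (W.sum fun w n => (n : ℝ) * f w)
        = W.sum fun w n => (n : ℝ) * g w - m * (n : ℝ) := by
      apply Finsupp.sum_congr
      intro w _
      rw [hf w]; ring
    rw [this]
    unfold tg
    rw [psize_cast, Finsupp.sum, Finsupp.sum, Finsupp.sum, Finset.sum_sub_distrib,
      ← Finset.mul_sum]
  set A : ℝ := tg g X - m * (psize X : ℝ) with hA
  set B : ℝ := tg g Y - m * (psize Y : ℝ) with hB
  have hAB : B < A := by
    rw [hsum_eq X, hsum_eq Y] at hfsum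
    exact hfsum
  set a : ℝ := (psize X : ℝ) with ha
  set b : ℝ := (psize Y : ℝ) with hb
  have hapos : 0 < a := by rw [ha]; exact_mod_cast psize_pos X hX
  have hbpos : 0 < b := by rw [hb]; exact_mod_cast psize_pos Y hY
  refine ⟨⌈(B * a - A * b) / (s₀ * (A - B))⌉₊ + 1, fun n hn => ?_⟩
  have hngt : ((B * a - A * b) / (s₀ * (A - B))) < (n : ℝ) := by
    have h1 : (B * a - A * b) / (s₀ * (A - B)) ≤ (⌈(B * a - A * b) / (s₀ * (A - B))⌉₊ : ℝ) :=
      Nat.le_ceil _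
    have h2 : (⌈(B * a - A * b) / (s₀ * (A - B))⌉₊ : ℝ) < (n : ℝ) := by
      exact_mod_cast hn
    linarith
  have hdiff : s₀ * (A - B) > 0 := mul_pos hs₀pos (by linarith)
  have hkey : B * a - A * b < (n : ℝ) * (s₀ * (A - B)) := by
    calc B * a - A * b ≤ ((B * a - A * b) / (s₀ * (A - B))) * (s₀ * (A - B)) := by
          rw [div_mul_cancel₀ _ (ne_of_gt hdiff)]
      _ < (n : ℝ) * (s₀ * (A - B)) := by
          exact mul_lt_mul_of_pos_right hngt hdiff
  -- denominators
  have hdX : (0:ℝ) < a + n * s₀ := by positivity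
  have hdY : (0:ℝ) < b + n * s₀ := by positivity
  rw [qam_eq, qam_eq]
  apply hinvmono
  simp only [tg_add, tg_smul, psize_add, psize_smul]
  push_cast
  rw [← ha, ← hb, ← hs₀]
  rw [div_lt_div_iff₀ hdY hdX]
  have hX' : tg g X = A + m * a := by rw [hA]; ring
  have hY' : tg g Y = B + m * b := by rw [hB]; ring
  rw [hX', hY', htgZ]
  nlinarith [hkey]
end

section
/- Let f : ℕ → ℝ be positive, non-increasing, eventually convex (there is k₀ such that f(k+2) − f(k+1) ≥ f(k+1) − f(k) for all k ≥ k₀), and suppose the infimum L of {f(n) : n ≥ 1} satisfies L > 0. Define the rank-discounted value V_f(X) = Σ_{k=1}^{|X|} f(k)·X_k. Let Z₀ be a fixed population and let X be a population that is moderate with respect to Z₀, meaning that for every w with X(w) ≠ 0 there is z ≤ w with Z₀(z) ≠ 0. Then V_f(X + n·Z₀) − V_f(n·Z₀) → L·Tot(X) as n → ∞. -/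
/-- The welfare levels of a population, with multiplicity, sorted in increasing order.
The `k`-th worst-off individual (1-indexed) has welfare `(ranked X).getD (k-1) 0`. -/
noncomputable def ranked (X : ℝ →₀ ℕ) : List ℝ :=
  (Finsupp.toMultiset X).sort (· ≤ ·)

/-- Rank-discounted value: `Σ_{k=1}^{|X|} f(k) · X_k`, where `X_k` is the `k`-th
smallest welfare level of `X` counted with multiplicity. -/
noncomputable def vrd (f : ℕ → ℝ) (X : ℝ →₀ ℕ) : ℝ :=
  ∑ k ∈ Finset.range (ranked X).length, f (k + 1) * (ranked X).getD k 0

open Filter Topology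

lemma Multiset.sort_add_of_forall_le {α : Type*} [LinearOrder α] {s t : Multiset α}
    (h : ∀ a ∈ s, ∀ b ∈ t, a ≤ b) :
    (s + t).sort (· ≤ ·) = s.sort (· ≤ ·) ++ t.sort (· ≤ ·) := by
  refine List.Perm.eq_of_pairwise' (Multiset.pairwise_sort _ _)
    (List.pairwise_append.2 ⟨Multiset.pairwise_sort _ _, Multiset.pairwise_sort _ _, ?_⟩) ?_
  · simpa only [Multiset.mem_sort] using h
  · rw [← Multiset.coe_eq_coe, ← Multiset.coe_add, Multiset.sort_eq, Multiset.sort_eq,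
      Multiset.sort_eq]

lemma Multiset.sort_eq_filter_le_append {α : Type*} [LinearOrder α] (w : α) (s : Multiset α) :
    s.sort (· ≤ ·) = (s.filter (· ≤ w)).sort (· ≤ ·) ++ (s.filter (¬ · ≤ w)).sort (· ≤ ·) := by
  conv_lhs => rw [← Multiset.filter_add_not (· ≤ w) s]
  refine Multiset.sort_add_of_forall_le fun a ha b hb => ?_
  exact (lt_of_le_of_lt (Multiset.mem_filter.mp ha).2 (not_le.mp (Multiset.mem_filter.mp hb).2)).le

lemma Multiset.sort_cons_eq_filter_le_append {α : Type*} [LinearOrder α] (w : α)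
    (s : Multiset α) :
    (w ::ₘ s).sort (· ≤ ·) =
      (s.filter (· ≤ w)).sort (· ≤ ·) ++ w :: (s.filter (¬ · ≤ w)).sort (· ≤ ·) := by
  rw [Multiset.sort_eq_filter_le_append w, Multiset.filter_cons_of_pos (p := (· ≤ w)) s le_rfl,
    Multiset.filter_cons_of_neg (p := (¬ · ≤ w)) s (not_not.mpr le_rfl), ← Multiset.singleton_add,
    add_comm, Multiset.sort_add_of_forall_le fun a ha b hb => ?_, Multiset.sort_singleton,
    List.append_assoc, List.singleton_append]
  rw [Multiset.mem_singleton.mp hb]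
  exact (Multiset.mem_filter.mp ha).2

noncomputable def rankValue (f : ℕ → ℝ) (l : List ℝ) : ℝ :=
  ∑ k ∈ Finset.range l.length, f (k + 1) * l.getD k 0

lemma rankValue_append (f : ℕ → ℝ) (l₁ l₂ : List ℝ) :
    rankValue f (l₁ ++ l₂) = rankValue f l₁ + rankValue (fun k => f (l₁.length + k)) l₂ := by
  unfold rankValue
  rw [List.length_append, Finset.sum_range_add]
  congr 1
  · refine Finset.sum_congr rfl fun k hk => ?_
    rw [List.getD_append _ _ _ _ (Finset.mem_range.mp hk)]
  · refine Finset.sum_congr rfl fun k _ => ?_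
    rw [List.getD_append_right _ _ _ _ (by omega), Nat.add_sub_cancel_left, add_assoc]

lemma rankValue_cons (f : ℕ → ℝ) (a : ℝ) (l : List ℝ) :
    rankValue f (a :: l) = f 1 * a + rankValue (fun k => f (k + 1)) l := by
  unfold rankValue
  rw [List.length_cons, Finset.sum_range_succ', add_comm]
  simp only [List.getD_cons_succ, List.getD_cons_zero, zero_add]

lemma rankValue_insert_sub (f : ℕ → ℝ) (l₁ l₂ : List ℝ) (w : ℝ) :
    rankValue f (l₁ ++ w :: l₂) - rankValue f (l₁ ++ l₂) =
      f (l₁.length + 1) * w + ∑ j ∈ Finset.range l₂.length,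
        (f (l₁.length + j + 2) - f (l₁.length + j + 1)) * l₂.getD j 0 := by
  rw [rankValue_append, rankValue_append, rankValue_cons]
  unfold rankValue
  rw [add_sub_add_left_eq_sub, add_sub_assoc, ← Finset.sum_sub_distrib]
  congr 1
  refine Finset.sum_congr rfl fun j _ => ?_
  ring_nf

lemma abs_sum_range_sub_mul_le {g : ℕ → ℝ} (hg : Antitone g) {a : ℕ → ℝ} {M : ℝ} (m : ℕ)
    (ha : ∀ j < m, |a j| ≤ M) :
    |∑ j ∈ Finset.range m, (g (j + 1) - g j) * a j| ≤ (g 0 - g m) * M := by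
  calc |∑ j ∈ Finset.range m, (g (j + 1) - g j) * a j|
      ≤ ∑ j ∈ Finset.range m, |(g (j + 1) - g j) * a j| := Finset.abs_sum_le_sum_abs _ _
    _ ≤ ∑ j ∈ Finset.range m, (g j - g (j + 1)) * M := by
        refine Finset.sum_le_sum fun j hj => ?_
        have hstep : 0 ≤ g j - g (j + 1) := sub_nonneg.mpr (hg (Nat.le_succ j))
        rw [abs_mul, abs_sub_comm, abs_of_nonneg hstep]
        exact mul_le_mul_of_nonneg_left (ha j (Finset.mem_range.mp hj)) hstep
    _ = (g 0 - g m) * M := by rw [← Finset.sum_mul, Finset.sum_range_sub']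

lemma abs_rankValue_insert_sub_sub_le {f : ℕ → ℝ} (hf : Antitone f) {L : ℝ}
    (hLf : ∀ k, L ≤ f (k + 1)) {M : ℝ} (hM0 : 0 ≤ M) (l₁ l₂ : List ℝ)
    (hM : ∀ x ∈ l₂, |x| ≤ M) (w : ℝ) {n : ℕ} (hn : n ≤ l₁.length) :
    |rankValue f (l₁ ++ w :: l₂) - rankValue f (l₁ ++ l₂) - L * w|
      ≤ (f (n + 1) - L) * (|w| + M) := by
  set p := l₁.length
  have hfp : f (p + 1) ≤ f (n + 1) := hf (by omega)
  have hhead : |f (p + 1) * w - L * w| ≤ (f (n + 1) - L) * |w| := by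
    rw [← sub_mul, abs_mul, abs_of_nonneg (sub_nonneg.mpr (hLf p))]
    gcongr
  have htail : |∑ j ∈ Finset.range l₂.length, (f (p + j + 2) - f (p + j + 1)) * l₂.getD j 0|
      ≤ (f (p + 1) - f (p + l₂.length + 1)) * M :=
    abs_sum_range_sub_mul_le (g := fun j => f (p + j + 1))
      (hf.comp_monotone fun _ _ h => by omega) l₂.length fun j hj => by
        rw [List.getD_eq_getElem _ _ hj]
        exact hM _ (List.getElem_mem hj)
  rw [rankValue_insert_sub, add_sub_right_comm]
  calc _ ≤ (f (n + 1) - L) * |w| + (f (p + 1) - f (p + l₂.length + 1)) * M :=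
        (abs_add_le _ _).trans (add_le_add hhead htail)
    _ ≤ (f (n + 1) - L) * (|w| + M) := by
        nlinarith [hLf (p + l₂.length)]

lemma tendsto_rankValue_sort_cons_sub {f : ℕ → ℝ} (hf : Antitone f) {L : ℝ}
    (hL : IsGLB (Set.range fun n : ℕ => f (n + 1)) L) {Z : Multiset ℝ} {z w : ℝ} (hz : z ∈ Z)
    (hzw : z ≤ w) (s : Multiset ℝ) :
    Tendsto (fun n : ℕ => rankValue f ((w ::ₘ (s + n • Z)).sort (· ≤ ·))
      - rankValue f ((s + n • Z).sort (· ≤ ·))) atTop (𝓝 (L * w)) := by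
  set M := ((s + Z).map abs).sum
  have habs : ∀ x ∈ (s + Z).map abs, 0 ≤ x :=
    Multiset.forall_mem_map_iff.mpr fun x _ => abs_nonneg x
  have hM : ∀ n : ℕ, ∀ x ∈ s + n • Z, |x| ≤ M := by
    intro n x hx
    refine Multiset.single_le_sum habs _ (Multiset.mem_map_of_mem _ ?_)
    rcases Multiset.mem_add.mp hx with hxs | hxZ
    · exact Multiset.mem_add.mpr (Or.inl hxs)
    · exact Multiset.mem_add.mpr (Or.inr (Multiset.mem_nsmul.mp hxZ).2)
  have hM0 : 0 ≤ M := Multiset.sum_nonneg habs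
  have hrank : ∀ n : ℕ, n ≤ Multiset.card ((s + n • Z).filter (· ≤ w)) := fun n =>
    calc n ≤ n * Z.count z := Nat.le_mul_of_pos_right n (Multiset.count_pos.mpr hz)
      _ ≤ (s + n • Z).count z := by simp
      _ = ((s + n • Z).filter (· ≤ w)).count z :=
        (Multiset.count_filter_of_pos (p := (· ≤ w)) hzw).symm
      _ ≤ _ := Multiset.count_le_card _ _
  have hbound : ∀ n : ℕ, |rankValue f ((w ::ₘ (s + n • Z)).sort (· ≤ ·))
      - rankValue f ((s + n • Z).sort (· ≤ ·)) - L * w| ≤ (f (n + 1) - L) * (|w| + M) := by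
    intro n
    rw [Multiset.sort_cons_eq_filter_le_append w, Multiset.sort_eq_filter_le_append w (s + n • Z)]
    refine abs_rankValue_insert_sub_sub_le hf (fun k => hL.1 ⟨k, rfl⟩) hM0 _ _
      (fun x hx => hM n x (Multiset.mem_of_mem_filter ((Multiset.mem_sort _).mp hx))) w ?_
    rw [Multiset.length_sort]
    exact hrank n
  have hlim : Tendsto (fun n : ℕ => (f (n + 1) - L) * (|w| + M)) atTop (𝓝 0) := by
    simpa using ((tendsto_atTop_isGLB (fun a b h => hf (Nat.add_le_add_right h 1)) hL).sub_const
      L).mul_const (|w| + M)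
  exact tendsto_sub_nhds_zero_iff.mp (squeeze_zero_norm hbound hlim)

theorem tendsto_rankValue_sort_add_nsmul_sub {f : ℕ → ℝ} (hf : Antitone f) {L : ℝ}
    (hL : IsGLB (Set.range fun n : ℕ => f (n + 1)) L) {Z : Multiset ℝ} (s : Multiset ℝ)
    (hmod : ∀ w ∈ s, ∃ z ∈ Z, z ≤ w) :
    Tendsto (fun n : ℕ => rankValue f ((s + n • Z).sort (· ≤ ·))
      - rankValue f ((n • Z).sort (· ≤ ·))) atTop (𝓝 (L * s.sum)) := by
  induction s using Multiset.induction_on with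
  | empty => simp
  | cons w s ih =>
    obtain ⟨z, hz, hzw⟩ := hmod w (Multiset.mem_cons_self w s)
    have hsum := (tendsto_rankValue_sort_cons_sub hf hL hz hzw s).add
      (ih fun x hx => hmod x (Multiset.mem_cons_of_mem hx))
    rw [Multiset.sum_cons, mul_add]
    refine hsum.congr fun n => ?_
    rw [Multiset.cons_add]
    ring

theorem stmt_12_general (f : ℕ → ℝ)
    (hmono : ∀ k, f (k + 1) ≤ f k)
    (L : ℝ) (hL : IsGLB (Set.range fun n : ℕ => f (n + 1)) L)
    (Z₀ : ℝ →₀ ℕ)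
    (X : ℝ →₀ ℕ)
    (hmod : ∀ w : ℝ, X w ≠ 0 → ∃ z ≤ w, Z₀ z ≠ 0) :
    Filter.Tendsto (fun n : ℕ => vrd f (X + n • Z₀) - vrd f (n • Z₀))
      Filter.atTop (nhds (L * ptot X)) := by
  have hmod' : ∀ w ∈ Finsupp.toMultiset X, ∃ z ∈ Finsupp.toMultiset Z₀, z ≤ w := by
    intro w hw
    obtain ⟨z, hzw, hz⟩ := hmod w (by simpa using hw)
    exact ⟨z, by simpa using hz, hzw⟩
  have htot : (Finsupp.toMultiset X).sum = ptot X := by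
    simp [Finsupp.sum_toMultiset, ptot]
  have key := tendsto_rankValue_sort_add_nsmul_sub (antitone_nat_of_succ_le hmono) hL _ hmod'
  rw [htot] at key
  refine key.congr fun n => ?_
  simp only [vrd, ranked, map_add, map_nsmul]
  rfl

theorem stmt_12 (f : ℕ → ℝ)
    (hpos : ∀ n : ℕ, n ≥ 1 → 0 < f n)
    (hmono : ∀ k, f (k + 1) ≤ f k)
    (hconv : ∃ k₀ : ℕ, ∀ k ≥ k₀, f (k + 2) - f (k + 1) ≥ f (k + 1) - f k)
    (L : ℝ) (hL : IsGLB (Set.range fun n : ℕ => f (n + 1)) L) (hLpos : 0 < L)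
    (Z₀ : ℝ →₀ ℕ) (hZ₀ : Z₀ ≠ 0)
    (X : ℝ →₀ ℕ) (hX : X ≠ 0)
    (hmod : ∀ w : ℝ, X w ≠ 0 → ∃ z ≤ w, Z₀ z ≠ 0) :
    Filter.Tendsto (fun n : ℕ => vrd f (X + n • Z₀) - vrd f (n • Z₀))
      Filter.atTop (nhds (L * ptot X)) :=
  stmt_12_general f hmono L hL Z₀ X hmod
end

section
/- Let f : ℕ → ℝ be positive, non-increasing, eventually convex (there is k₀ such that f(k+2) − f(k+1) ≥ f(k+1) − f(k) for all k ≥ k₀), and suppose the infimum L of {f(n) : n ≥ 1} satisfies L > 0. Define the rank-discounted value V_f(X) = Σ_{k=1}^{|X|} f(k)·X_k. Let Z₀ be a fixed population, and let X and Y be populations that are moderate with respect to Z₀, meaning that for every w with X(w) ≠ 0 (respectively Y(w) ≠ 0) there is z ≤ w with Z₀(z) ≠ 0. If Tot(X) > Tot(Y), then there exists N ∈ ℕ such that V_f(X + n·Z₀) > V_f(Y + n·Z₀) for every integer n ≥ N. -/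
/-!
Write `f = L + g`, where `g ≥ 0` is antitone and `g n → 0`. Then
`V_f(W) = L · Tot(W) + Σ_k g(k+1) · W_k`, so `V_f(X + n•Z₀) - V_f(Y + n•Z₀)` is
`L · (Tot X - Tot Y) > 0` plus a `g`-weighted sum of differences of ranked welfare levels.
The rankings of `X + n•Z₀` and `Y + n•Z₀` both follow the ranking of `n•Z₀` except on at most
`(|supp Z₀| + 1) · (|X| + |Y|)` ranks, and moderation forces all of these ranks to be `≥ n`.
There the weights are at most `g n`, and the welfare levels are bounded, so the error term
tends to `0`.
-/

open Filter Topology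

namespace List

theorem Pairwise.lt_countP_iff {α : Type*} [Preorder α] {l : List α} (hl : l.Pairwise (· ≤ ·))
    {p : α → Prop} [DecidablePred p] (hp : ∀ ⦃a b⦄, a ≤ b → p b → p a) {k : ℕ}
    (hk : k < l.length) : k < l.countP (p ·) ↔ p l[k] := by
  induction l generalizing k with
  | nil => simp at hk
  | cons x t ih =>
    have hxt : ∀ y ∈ t, x ≤ y := (pairwise_cons.mp hl).1
    cases k with
    | zero =>
      simp only [getElem_cons_zero, countP_pos_iff, decide_eq_true_eq]
      refine ⟨fun ⟨y, hy, hpy⟩ => ?_, fun h => ⟨x, mem_cons_self, h⟩⟩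
      rcases mem_cons.mp hy with rfl | hy
      · exact hpy
      · exact hp (hxt y hy) hpy
    | succ k =>
      have hk' : k < t.length := by simpa using hk
      rw [getElem_cons_succ, countP_cons]
      by_cases hpx : p x
      · simp [hpx, ih hl.of_cons hk']
      · have ht : t.countP (p ·) = 0 :=
          countP_eq_zero.mpr fun y hy hpy => hpx (hp (hxt y hy) (by simpa using hpy))
        simpa [hpx, ht] using fun h => hpx (hp (hxt _ (getElem_mem hk')) h)

end List

noncomputable def rankedAt (W : ℝ →₀ ℕ) (k : ℕ) : ℝ := (ranked W).getD k 0

noncomputable def numBelow (W : ℝ →₀ ℕ) (w : ℝ) : ℕ := W.toMultiset.countP (· < w)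

noncomputable def numAtMost (W : ℝ →₀ ℕ) (w : ℝ) : ℕ := W.toMultiset.countP (· ≤ w)

section Ranking

variable {W X Z : ℝ →₀ ℕ} {k : ℕ} {w : ℝ}

lemma psize_eq_card (W : ℝ →₀ ℕ) : psize W = Multiset.card W.toMultiset := by
  rw [Finsupp.card_toMultiset]; rfl

lemma psize_add_nsmul (X Z : ℝ →₀ ℕ) (n : ℕ) : psize (X + n • Z) = psize X + n * psize Z := by
  simp [psize_eq_card]

lemma psize_pos_s13 (hW : W ≠ 0) : 0 < psize W := by
  obtain ⟨w, hw⟩ := Finsupp.support_nonempty_iff.mpr hW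
  rw [psize_eq_card]
  exact Multiset.card_pos_iff_exists_mem.mpr ⟨w, (Finsupp.mem_toMultiset _ _).mpr hw⟩

lemma length_ranked (W : ℝ →₀ ℕ) : (ranked W).length = psize W := by
  rw [ranked, Multiset.length_sort, psize_eq_card]

lemma numBelow_add (X Z : ℝ →₀ ℕ) (w : ℝ) : numBelow (X + Z) w = numBelow X w + numBelow Z w := by
  simp [numBelow, Multiset.countP_add]

lemma numBelow_nsmul (n : ℕ) (Z : ℝ →₀ ℕ) (w : ℝ) : numBelow (n • Z) w = n * numBelow Z w := by
  simp [numBelow, Multiset.countP_nsmul]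

lemma numAtMost_add (X Z : ℝ →₀ ℕ) (w : ℝ) :
    numAtMost (X + Z) w = numAtMost X w + numAtMost Z w := by
  simp [numAtMost, Multiset.countP_add]

lemma numBelow_le_psize (W : ℝ →₀ ℕ) (w : ℝ) : numBelow W w ≤ psize W :=
  psize_eq_card W ▸ Multiset.countP_le_card _ _

lemma numAtMost_le_psize (W : ℝ →₀ ℕ) (w : ℝ) : numAtMost W w ≤ psize W :=
  psize_eq_card W ▸ Multiset.countP_le_card _ _

lemma rankedAt_of_psize_le (hk : psize W ≤ k) : rankedAt W k = 0 :=
  List.getD_eq_default _ _ (length_ranked W ▸ hk)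

lemma rankedAt_mem_support (hk : k < psize W) : rankedAt W k ∈ W.support := by
  rw [← length_ranked] at hk
  rw [rankedAt, List.getD_eq_getElem _ _ hk, ← Finsupp.mem_toMultiset,
    ← Multiset.mem_sort (· ≤ ·)]
  exact List.getElem_mem hk

lemma abs_rankedAt_le {M : ℝ} (hM0 : 0 ≤ M) (hM : ∀ w ∈ W.support, |w| ≤ M) (k : ℕ) :
    |rankedAt W k| ≤ M := by
  rcases lt_or_ge k (psize W) with hk | hk
  · exact hM _ (rankedAt_mem_support hk)
  · simpa [rankedAt_of_psize_le hk] using hM0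

lemma lt_countP_iff_rankedAt (p : ℝ → Prop) [DecidablePred p] (hp : ∀ ⦃a b⦄, a ≤ b → p b → p a)
    (hk : k < psize W) : k < W.toMultiset.countP p ↔ p (rankedAt W k) := by
  rw [← length_ranked] at hk
  have hsort := Multiset.pairwise_sort W.toMultiset (· ≤ ·)
  rw [rankedAt, List.getD_eq_getElem _ _ hk, ← (Multiset.sort_eq W.toMultiset (· ≤ ·)),
    Multiset.coe_countP]
  exact hsort.lt_countP_iff hp hk

lemma lt_numAtMost_iff (hk : k < psize W) : k < numAtMost W w ↔ rankedAt W k ≤ w :=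
  lt_countP_iff_rankedAt _ (fun _ _ => le_trans) hk

lemma lt_numBelow_iff (hk : k < psize W) : k < numBelow W w ↔ rankedAt W k < w :=
  lt_countP_iff_rankedAt _ (fun _ _ => lt_of_le_of_lt) hk

lemma numBelow_rankedAt_le (hk : k < psize W) : numBelow W (rankedAt W k) ≤ k :=
  not_lt.mp fun h => lt_irrefl _ ((lt_numBelow_iff hk).mp h)

lemma lt_numAtMost_rankedAt (hk : k < psize W) : k < numAtMost W (rankedAt W k) :=
  (lt_numAtMost_iff hk).mpr le_rfl

lemma rankedAt_eq_of_numBelow_le (h₁ : numBelow W w ≤ k) (h₂ : k < numAtMost W w) :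
    rankedAt W k = w := by
  have hk := h₂.trans_le (numAtMost_le_psize W w)
  exact le_antisymm ((lt_numAtMost_iff hk).mp h₂)
    (not_lt.mp ((lt_numBelow_iff hk).not.mp h₁.not_gt))

lemma rankedAt_add_of_numBelow_le (hk : k < psize Z) (hw : rankedAt Z k = w)
    (h : numBelow X w + numBelow Z w ≤ k) : rankedAt (X + Z) k = w := by
  apply rankedAt_eq_of_numBelow_le
  · rwa [numBelow_add]
  · have := hw ▸ lt_numAtMost_rankedAt hk
    rw [numAtMost_add]
    omega

end Ranking

def IsModerate (X Z : ℝ →₀ ℕ) : Prop := ∀ w : ℝ, X w ≠ 0 → ∃ z ≤ w, Z z ≠ 0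

lemma IsModerate.numBelow_eq_zero {X Z : ℝ →₀ ℕ} (h : IsModerate X Z) {w : ℝ}
    (hw : numBelow Z w = 0) : numBelow X w = 0 := by
  refine Multiset.countP_eq_zero.mpr fun x hx hxw => ?_
  obtain ⟨z, hzx, hz⟩ := h x (Finsupp.mem_support_iff.mp ((Finsupp.mem_toMultiset _ _).mp hx))
  exact Multiset.countP_eq_zero.mp hw z ((Finsupp.mem_toMultiset _ _).mpr
    (Finsupp.mem_support_iff.mpr hz)) (hzx.trans_lt hxw)

/-- Ranks at which `X + n • Z` and `Y + n • Z` may differ, for `A = |X| + |Y|`: windows of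
width `A` starting at the block boundaries `n * numBelow Z w` of the ranking of `n • Z`, and the
tail after rank `n * |Z|`. -/
noncomputable def exceptionalRanks (Z : ℝ →₀ ℕ) (n A : ℕ) : Finset ℕ :=
  {k ∈ (insert (psize Z) (Z.support.image (numBelow Z))).biUnion
    (fun m => Finset.Ico (n * m) (n * m + A)) | n ≤ k}

lemma card_exceptionalRanks_le (Z : ℝ →₀ ℕ) (n A : ℕ) :
    (exceptionalRanks Z n A).card ≤ (Z.support.card + 1) * A := by
  refine (Finset.card_filter_le _ _).trans ((Finset.card_biUnion_le_card_mul _ _ A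
    fun m _ => by simp).trans (Nat.mul_le_mul_right A ?_))
  exact (Finset.card_insert_le _ _).trans (Nat.succ_le_succ Finset.card_image_le)

lemma le_of_mem_exceptionalRanks {Z : ℝ →₀ ℕ} {n A k : ℕ} (hk : k ∈ exceptionalRanks Z n A) :
    n ≤ k :=
  (Finset.mem_filter.mp hk).2

/-- Below rank `n * |Z|` both rankings follow the ranking of `n • Z` except just after its block
boundaries; moderation excludes the boundary at rank `0`, so all exceptional ranks are `≥ n`. -/
lemma mem_exceptionalRanks_of_rankedAt_ne {X Y Z : ℝ →₀ ℕ} (hZ : Z ≠ 0) (hX : IsModerate X Z)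
    (hY : IsModerate Y Z) {n k : ℕ} (hk : k < psize X + psize Y + n * psize Z)
    (hne : rankedAt (X + n • Z) k ≠ rankedAt (Y + n • Z) k) :
    k ∈ exceptionalRanks Z n (psize X + psize Y) := by
  have hZpos := psize_pos_s13 hZ
  simp only [exceptionalRanks, Finset.mem_filter, Finset.mem_biUnion, Finset.mem_insert,
    Finset.mem_image, Finset.mem_Ico]
  rcases le_or_gt (n * psize Z) k with hkZ | hkZ
  · exact ⟨⟨psize Z, Or.inl rfl, hkZ, by omega⟩, le_mul_of_one_le_right' hZpos |>.trans hkZ⟩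
  have hkZ' : k < psize (n • Z) := by simpa [psize_eq_card] using hkZ
  set w := rankedAt (n • Z) k with hwdef
  have hw : numBelow (n • Z) w ≤ k := numBelow_rankedAt_le hkZ'
  have hwZ : w ∈ Z.support := Finsupp.support_smul (rankedAt_mem_support hkZ')
  have hnZ := numBelow_nsmul n Z w
  have hfar : k < numBelow X w + numBelow Y w + n * numBelow Z w := by
    by_contra! hle
    refine hne ?_
    rw [rankedAt_add_of_numBelow_le hkZ' hwdef.symm (by omega),
      rankedAt_add_of_numBelow_le hkZ' hwdef.symm (by omega)]
  have hXw := numBelow_le_psize X w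
  have hYw := numBelow_le_psize Y w
  refine ⟨⟨numBelow Z w, Or.inr ⟨w, hwZ, rfl⟩, by omega, by omega⟩, ?_⟩
  rcases Nat.eq_zero_or_pos (numBelow Z w) with h0 | hpos
  · simp [h0, hX.numBelow_eq_zero h0, hY.numBelow_eq_zero h0] at hfar
  · exact (le_mul_of_one_le_right' hpos).trans (hnZ ▸ hw)

lemma abs_sum_mul_sub_le {g a b : ℕ → ℝ} {D : Finset ℕ} {K : ℕ} {c M : ℝ}
    (hg : ∀ k ∈ D, |g k| ≤ c) (hab : ∀ k, |a k - b k| ≤ M)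
    (hD : ∀ k < K, a k ≠ b k → k ∈ D) :
    |∑ k ∈ Finset.range K, g k * (a k - b k)| ≤ D.card * (c * M) := by
  have hsub : {k ∈ Finset.range K | a k ≠ b k} ⊆ D := fun k hk => by
    rw [Finset.mem_filter, Finset.mem_range] at hk
    exact hD k hk.1 hk.2
  rw [← Finset.sum_filter_of_ne (p := fun k => a k ≠ b k)
    fun k _ h hab => h (by rw [hab, sub_self, mul_zero])]
  calc |∑ k ∈ Finset.range K with a k ≠ b k, g k * (a k - b k)|
      ≤ ∑ k ∈ D, |g k * (a k - b k)| :=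
        (Finset.abs_sum_le_sum_abs _ _).trans
          (Finset.sum_le_sum_of_subset_of_nonneg hsub fun _ _ _ => abs_nonneg _)
    _ ≤ D.card * (c * M) := by
        rw [← nsmul_eq_mul]
        refine Finset.sum_le_card_nsmul _ _ _ fun k hk => ?_
        rw [abs_mul]
        exact mul_le_mul (hg k hk) (hab k) (abs_nonneg _) ((abs_nonneg _).trans (hg k hk))

lemma vrd_eq_sum_range (f : ℕ → ℝ) {W : ℝ →₀ ℕ} {K : ℕ} (hK : psize W ≤ K) :
    vrd f W = ∑ k ∈ Finset.range K, f (k + 1) * rankedAt W k := by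
  refine Finset.sum_subset (Finset.range_subset_range.mpr (length_ranked W ▸ hK)) ?_
  intro k _ hk
  rw [Finset.mem_range, not_lt, length_ranked] at hk
  rw [← rankedAt, rankedAt_of_psize_le hk, mul_zero]

lemma ptot_eq_sum_toMultiset (W : ℝ →₀ ℕ) : ptot W = W.toMultiset.sum := by
  simp [ptot, Finsupp.sum_toMultiset, nsmul_eq_mul]

lemma ptot_add_nsmul (X Z : ℝ →₀ ℕ) (n : ℕ) : ptot (X + n • Z) = ptot X + n * ptot Z := by
  simp [ptot_eq_sum_toMultiset, Multiset.sum_nsmul, nsmul_eq_mul]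

lemma ptot_eq_vrd_one (W : ℝ →₀ ℕ) : ptot W = vrd 1 W := by
  rw [ptot_eq_sum_toMultiset, ← Multiset.sort_eq W.toMultiset (· ≤ ·), Multiset.sum_coe, vrd,
    ranked]
  simp only [Pi.one_apply, one_mul]
  rw [Finset.sum_range fun k => _, ← Fin.sum_univ_getElem]
  exact Finset.sum_congr rfl fun i _ => (List.getD_eq_getElem _ _ i.2).symm

lemma vrd_eq_mul_ptot_add (f : ℕ → ℝ) (L : ℝ) {W : ℝ →₀ ℕ} {K : ℕ} (hK : psize W ≤ K) :
    vrd f W = L * ptot W + ∑ k ∈ Finset.range K, (f (k + 1) - L) * rankedAt W k := by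
  rw [vrd_eq_sum_range f hK, ptot_eq_vrd_one, vrd_eq_sum_range 1 hK, Finset.mul_sum,
    ← Finset.sum_add_distrib]
  simp only [Pi.one_apply]
  congr! 1; ring

lemma abs_vrd_add_nsmul_sub_sub_le {f : ℕ → ℝ} {L M : ℝ} (hf : Antitone f)
    (hfL : ∀ k, L ≤ f (k + 1)) {X Y Z : ℝ →₀ ℕ} (hZ : Z ≠ 0) (hX : IsModerate X Z)
    (hY : IsModerate Y Z) (hM0 : 0 ≤ M) (hM : ∀ w ∈ X.support ∪ Y.support ∪ Z.support, |w| ≤ M)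
    (n : ℕ) :
    |vrd f (X + n • Z) - vrd f (Y + n • Z) - L * (ptot X - ptot Y)|
      ≤ ((Z.support.card + 1) * (psize X + psize Y) : ℕ) * ((f n - L) * (2 * M)) := by
  set K := psize X + psize Y + n * psize Z
  have hbound : ∀ W : ℝ →₀ ℕ, W.support ⊆ X.support ∪ Y.support → ∀ k,
      |rankedAt (W + n • Z) k| ≤ M := fun W hW => abs_rankedAt_le hM0 fun w hw => by
    refine hM w ?_
    rcases Finset.mem_union.mp (Finsupp.support_add hw) with h | h
    · exact Finset.mem_union_left _ (hW h)
    · exact Finset.mem_union_right _ (Finsupp.support_smul h)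
  have hdiff : ∀ k, |rankedAt (X + n • Z) k - rankedAt (Y + n • Z) k| ≤ 2 * M := fun k =>
    (abs_sub _ _).trans (by
      linarith [hbound X Finset.subset_union_left k, hbound Y Finset.subset_union_right k])
  have hsplit : vrd f (X + n • Z) - vrd f (Y + n • Z) - L * (ptot X - ptot Y) =
      ∑ k ∈ Finset.range K,
        (f (k + 1) - L) * (rankedAt (X + n • Z) k - rankedAt (Y + n • Z) k) := by
    rw [vrd_eq_mul_ptot_add f L (K := K) (by rw [psize_add_nsmul]; omega),
      vrd_eq_mul_ptot_add f L (K := K) (by rw [psize_add_nsmul]; omega), ptot_add_nsmul,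
      ptot_add_nsmul]
    simp only [mul_sub, Finset.sum_sub_distrib]
    ring
  rw [hsplit]
  refine (abs_sum_mul_sub_le (D := exceptionalRanks Z n (psize X + psize Y)) (c := f n - L)
    (fun k hk => ?_) hdiff fun k hk hne =>
      mem_exceptionalRanks_of_rankedAt_ne hZ hX hY hk hne).trans ?_
  · have hnk : n ≤ k + 1 := (le_of_mem_exceptionalRanks hk).trans k.le_succ
    rw [abs_of_nonneg (sub_nonneg.mpr (hfL k))]
    exact sub_le_sub_right (hf hnk) L
  · have hweight : 0 ≤ (f n - L) * (2 * M) :=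
      mul_nonneg (sub_nonneg.mpr ((hfL n).trans (hf n.le_succ))) (by linarith)
    gcongr
    exact card_exceptionalRanks_le Z n _

theorem stmt_13_general (f : ℕ → ℝ)
    (hmono : ∀ k, f (k + 1) ≤ f k)
    (L : ℝ) (hL : IsGLB (Set.range fun n : ℕ => f (n + 1)) L) (hLpos : 0 < L)
    (Z₀ : ℝ →₀ ℕ) (hZ₀ : Z₀ ≠ 0)
    (X Y : ℝ →₀ ℕ)
    (hXmod : ∀ w : ℝ, X w ≠ 0 → ∃ z ≤ w, Z₀ z ≠ 0)
    (hYmod : ∀ w : ℝ, Y w ≠ 0 → ∃ z ≤ w, Z₀ z ≠ 0)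
    (htot : ptot X > ptot Y) :
    ∃ N : ℕ, ∀ n : ℕ, n ≥ N → vrd f (X + n • Z₀) > vrd f (Y + n • Z₀) := by
  have hf : Antitone f := antitone_nat_of_succ_le hmono
  have hlim : Tendsto f atTop (𝓝 L) :=
    (tendsto_add_atTop_iff_nat 1).mp (tendsto_atTop_isGLB (fun a b h => hf (by omega)) hL)
  set S := X.support ∪ Y.support ∪ Z₀.support
  set C : ℝ := ((Z₀.support.card + 1) * (psize X + psize Y) : ℕ) * (2 * ∑ w ∈ S, |w|)
  have hsmall : ∀ᶠ n in atTop, C * (f n - L) < L * (ptot X - ptot Y) := by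
    refine ((hlim.sub_const L).const_mul C).eventually (gt_mem_nhds ?_)
    rw [sub_self, mul_zero]
    exact mul_pos hLpos (sub_pos.mpr htot)
  obtain ⟨N, hN⟩ := eventually_atTop.mp hsmall
  refine ⟨N, fun n hn => ?_⟩
  have hclose := abs_le.mp (abs_vrd_add_nsmul_sub_sub_le hf (fun k => hL.1 ⟨k, rfl⟩) hZ₀ hXmod
    hYmod (Finset.sum_nonneg fun w _ => abs_nonneg w)
    (fun w hw => Finset.single_le_sum (f := (|·|)) (fun w _ => abs_nonneg w) hw) n)
  linarith [hN n hn]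

theorem stmt_13 (f : ℕ → ℝ)
    (hpos : ∀ n : ℕ, n ≥ 1 → 0 < f n)
    (hmono : ∀ k, f (k + 1) ≤ f k)
    (hconv : ∃ k₀ : ℕ, ∀ k ≥ k₀, f (k + 2) - f (k + 1) ≥ f (k + 1) - f k)
    (L : ℝ) (hL : IsGLB (Set.range fun n : ℕ => f (n + 1)) L) (hLpos : 0 < L)
    (Z₀ : ℝ →₀ ℕ) (hZ₀ : Z₀ ≠ 0)
    (X Y : ℝ →₀ ℕ) (hX : X ≠ 0) (hY : Y ≠ 0)
    (hXmod : ∀ w : ℝ, X w ≠ 0 → ∃ z ≤ w, Z₀ z ≠ 0)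
    (hYmod : ∀ w : ℝ, Y w ≠ 0 → ∃ z ≤ w, Z₀ z ≠ 0)
    (htot : ptot X > ptot Y) :
    ∃ N : ℕ, ∀ n : ℕ, n ≥ N → vrd f (X + n • Z₀) > vrd f (Y + n • Z₀) :=
  stmt_13_general f hmono L hL hLpos Z₀ hZ₀ X Y hXmod hYmod htot
end

section
/- Let f : ℕ → ℝ be non-increasing, bounded below, and eventually convex (there is k₀ such that f(k+2) − f(k+1) ≥ f(k+1) − f(k) for all k ≥ k₀). Then for every fixed m ∈ ℕ, the sequence n·(f(n + m) − f(n)) tends to 0 as n → ∞. -/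
theorem stmt_14 (f : ℕ → ℝ)
    (hmono : ∀ k, f (k + 1) ≤ f k)
    (hbdd : BddBelow (Set.range f))
    (hconv : ∃ k₀ : ℕ, ∀ k ≥ k₀, f (k + 2) - f (k + 1) ≥ f (k + 1) - f k)
    (m : ℕ) :
    Filter.Tendsto (fun n : ℕ => (n : ℝ) * (f (n + m) - f n))
      Filter.atTop (nhds 0) := by
  obtain ⟨k₀, hk₀⟩ := hconv
  have hant : Antitone f := antitone_nat_of_succ_le hmono
  have hfL : Filter.Tendsto f Filter.atTop (nhds (⨅ n, f n)) :=
    tendsto_atTop_ciInf hant hbdd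
  have hdnonpos : ∀ n, f (n + 1) - f n ≤ 0 := fun n => sub_nonpos.2 (hmono n)
  have hd : ∀ j n, k₀ ≤ j → j ≤ n → f (j + 1) - f j ≤ f (n + 1) - f n := by
    intro j n hj hjn
    induction n, hjn using Nat.le_induction with
    | base => exact le_refl _
    | succ n hn ih => exact le_trans ih (hk₀ n (hj.trans hn))
  have hsum : ∀ n, k₀ ≤ n / 2 →
      f n - f (n / 2) ≤ ((n - n / 2 : ℕ) : ℝ) * (f (n + 1) - f n) := by
    intro n hn
    have h1 : f n - f (n / 2) = ∑ j ∈ Finset.Ico (n / 2) n, (f (j + 1) - f j) := by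
      rw [Finset.sum_Ico_eq_sub _ (Nat.div_le_self n 2), Finset.sum_range_sub,
        Finset.sum_range_sub]
      ring
    rw [h1]
    have hle : ∀ j ∈ Finset.Ico (n / 2) n, f (j + 1) - f j ≤ f (n + 1) - f n := by
      intro j hj
      obtain ⟨hj1, hj2⟩ := Finset.mem_Ico.1 hj
      exact hd j n (hn.trans hj1) hj2.le
    calc ∑ j ∈ Finset.Ico (n / 2) n, (f (j + 1) - f j)
        ≤ (Finset.Ico (n / 2) n).card • (f (n + 1) - f n) :=
          Finset.sum_le_card_nsmul _ _ _ hle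
      _ = ((n - n / 2 : ℕ) : ℝ) * (f (n + 1) - f n) := by
          rw [Nat.card_Ico, nsmul_eq_mul]
  have hkey : Filter.Tendsto (fun n : ℕ => (n : ℝ) * (f (n + 1) - f n))
      Filter.atTop (nhds 0) := by
    have hhalf : Filter.Tendsto (fun n : ℕ => n / 2) Filter.atTop Filter.atTop :=
      Filter.tendsto_atTop_atTop.2 (fun b => ⟨2 * b, fun n hn => by omega⟩)
    have hlo : Filter.Tendsto (fun n : ℕ => 2 * (f n - f (n / 2)))
        Filter.atTop (nhds 0) := by
      have := (hfL.sub (hfL.comp hhalf)).const_mul (2 : ℝ)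
      simpa using this
    refine tendsto_of_tendsto_of_tendsto_of_le_of_le' hlo tendsto_const_nhds ?_ ?_
    · filter_upwards [Filter.eventually_ge_atTop (2 * k₀ + 2)] with n hn
      have hk : k₀ ≤ n / 2 := by omega
      have hs := hsum n hk
      have hdn : f (n + 1) - f n ≤ 0 := hdnonpos n
      have hcard : (n : ℝ) ≤ 2 * ((n - n / 2 : ℕ) : ℝ) := by
        have : n ≤ 2 * (n - n / 2) := by omega
        exact_mod_cast this
      nlinarith
    · filter_upwards with n
      exact mul_nonpos_of_nonneg_of_nonpos (Nat.cast_nonneg n) (hdnonpos n)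
  induction m with
  | zero => simp only [Nat.add_zero, sub_self, mul_zero]; exact tendsto_const_nhds
  | succ m ih =>
    have h1 : Filter.Tendsto (fun n : ℕ => (n : ℝ) * (f (n + m + 1) - f (n + m)))
        Filter.atTop (nhds 0) := by
      have hcomp : Filter.Tendsto
          (fun n : ℕ => ((n + m : ℕ) : ℝ) * (f (n + m + 1) - f (n + m)))
          Filter.atTop (nhds 0) := hkey.comp (Filter.tendsto_add_atTop_nat m)
      refine tendsto_of_tendsto_of_tendsto_of_le_of_le hcomp tendsto_const_nhds ?_ ?_
      · intro n
        have hdn : f (n + m + 1) - f (n + m) ≤ 0 := hdnonpos (n + m)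
        have hle : (n : ℝ) ≤ ((n + m : ℕ) : ℝ) := by exact_mod_cast Nat.le_add_right n m
        exact mul_le_mul_of_nonpos_right hle hdn
      · intro n
        exact mul_nonpos_of_nonneg_of_nonpos (Nat.cast_nonneg n) (hdnonpos (n + m))
    have := h1.add ih
    have heq : (fun n : ℕ => (n : ℝ) * (f (n + (m + 1)) - f n)) =
        fun n : ℕ => (n : ℝ) * (f (n + m + 1) - f (n + m)) +
          (n : ℝ) * (f (n + m) - f n) := by
      funext n
      have : n + (m + 1) = n + m + 1 := by omega
      rw [this]; ring
    rw [heq]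
    simpa using this
end
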